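/- arXiv:2604.23891 — 2 statements merged into one kernel-verified Lean document; each statement's English description precedes it below -/
import Mathlib

section
/- Let μ ≥ 2 be an even integer, W a positive integer, K = μW + 1, and ψ_u ∈ (0, 2π) with t := 3/4 − ψ_u/(2π) such that tμ is not an integer; let K₁(ψ_u) = {k ∈ {2, …, K} : cos(ψ_u + (2π/μ)(k−1)) > 0} and V = sin(π/μ)/W. Then for every interferer phase ψ̃ ∈ (0, 2π) and every ζ̃ > 0, the received interference power satisfies ζ̃·[Σ_{k ∈ K₁(ψ_u)} cos(ψ̃ + (2π/μ)(k−1))]² = (ζ̃/V²)·sin²(ψ̃ − π/μ + (2π/μ)⌈tμ⌉). -/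
open Real Finset
open scoped Classical

/-! The activation indicator `cos (ψu + 2π m / μ) > 0` is `μ`-periodic in the integer `m`, so
the sum over the `μ W` ports is `W` times the sum over any `μ` consecutive integers. Since
`cos (ψu + 2π x / μ) = sin (2π (x - tμ) / μ)` and `tμ ∉ ℤ`, on the window starting at `⌈tμ⌉` exactly
the first `μ / 2` ports are active. Their cosines form an arithmetic progression through half a
turn, which sums to `-sin (ψ̃ - π/μ + 2π ⌈tμ⌉ / μ) / sin (π / μ)`. -/

namespace Function.Periodic

variable {M : Type*} [AddCancelCommMonoid M] {f : ℤ → M} {p : ℕ}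

theorem sum_range_add_eq (hf : Periodic f p) (a b : ℤ) :
    ∑ i ∈ range p, f (a + i) = ∑ i ∈ range p, f (b + i) := by
  have shift : ∀ a : ℤ, ∑ i ∈ range p, f (a + 1 + i) = ∑ i ∈ range p, f (a + i) := by
    intro a
    -- peel `f a = f (a + p)` off either end of `∑ i ∈ range (p + 1), f (a + i)`
    have h := (sum_range_succ' (fun i => f (a + i)) p).symm.trans
      (sum_range_succ (fun i => f (a + i)) p)
    simp only [Nat.cast_add, Nat.cast_one, Nat.cast_zero, add_zero, hf a] at h
    simpa only [add_right_comm, add_assoc] using add_right_cancel h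
  have h0 : ∀ a : ℤ, ∑ i ∈ range p, f (a + i) = ∑ i ∈ range p, f (0 + i) := by
    intro a
    induction a using Int.induction_on with
    | zero => rfl
    | succ k ih => rwa [shift]
    | pred k ih => rwa [← shift, sub_add_cancel]
  rw [h0 a, h0 b]

theorem sum_range_mul (hf : Periodic f p) (a b : ℤ) (n : ℕ) :
    ∑ i ∈ range (p * n), f (a + i) = n • ∑ i ∈ range p, f (b + i) := by
  induction n with
  | zero => simp
  | succ n ih =>
    rw [Nat.mul_succ, sum_range_add, ih, succ_nsmul]
    simp only [Nat.cast_add, ← add_assoc]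
    rw [hf.sum_range_add_eq]

end Function.Periodic

theorem sin_two_pi_div_mul_pos {μ x : ℝ} (hx : 0 < x) (hxμ : 2 * x < μ) :
    0 < sin (2 * π / μ * x) := by
  have hμ : 0 < μ := by linarith
  apply sin_pos_of_pos_of_lt_pi (by positivity)
  rw [div_mul_eq_mul_div, div_lt_iff₀ hμ]
  nlinarith [pi_pos]

theorem sin_two_pi_div_mul_neg {μ x : ℝ} (hμx : μ < 2 * x) (hxμ : x < μ) :
    sin (2 * π / μ * x) < 0 := by
  have hμ : 0 < μ := by linarith
  rw [← neg_pos, ← sin_sub_pi]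
  apply sin_pos_of_pos_of_lt_pi
  · rw [sub_pos, div_mul_eq_mul_div, lt_div_iff₀ hμ]
    nlinarith [pi_pos]
  · rw [sub_lt_iff_lt_add, div_mul_eq_mul_div, div_lt_iff₀ hμ]
    nlinarith [pi_pos]

theorem sin_pi_div_pos {μ : ℝ} (hμ : 1 < μ) : 0 < sin (π / μ) :=
  sin_pos_of_pos_of_lt_pi (div_pos pi_pos (by linarith)) (div_lt_self pi_pos hμ)

theorem sin_mul_sum_range_cos_of_mul_eq_pi {n : ℕ} {a : ℝ} (ha : n * a = π) (b : ℝ) :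
    sin (a / 2) * ∑ i ∈ range n, cos (b + a * i) = -sin (b - a / 2) := by
  have key := sin_mul_sum_cos n a b
  rw [show (n : ℝ) * a / 2 = π / 2 by rw [ha], sin_pi_div_two, one_mul,
    show ((n : ℝ) - 1) * a / 2 + b = b - a / 2 + π / 2 by linear_combination ha / 2,
    cos_add_pi_div_two] at key
  simpa only [add_comm b] using key

theorem sin_pi_div_mul_sum_range_cos {μ h : ℕ} (hμh : μ = h + h) (hh : h ≠ 0) (ψ x : ℝ) :
    sin (π / μ) * ∑ i ∈ range h, cos (ψ + 2 * π / μ * (x + i))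
      = -sin (ψ - π / μ + 2 * π / μ * x) := by
  have hhR : (h : ℝ) ≠ 0 := Nat.cast_ne_zero.mpr hh
  convert sin_mul_sum_range_cos_of_mul_eq_pi (n := h) (a := 2 * π / μ)
    (by rw [hμh]; push_cast; field_simp; ring) (ψ + 2 * π / μ * x) using 3
  · ring
  · congr 1
    ring
  · ring

-- A `Finset ℕ` used where a `Finset ℝ` is expected, as in the main theorem, is coerced through the
-- `Finset` monad.
theorem sum_natCast_Icc_two_sub_one {M : Type*} [AddCommMonoid M] (f : ℝ → M) (n : ℕ) :
    ∑ k ∈ ((Icc 2 (n + 1) : Finset ℕ) >>= fun a => pure (a : ℝ)), f (k - 1)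
      = ∑ i ∈ range n, f (1 + i) := by
  rw [bind_pure_comp, fmap_def, sum_image fun _ _ _ _ h => Nat.cast_injective h,
    ← Ico_add_one_right_eq_Icc, sum_Ico_eq_sum_range]
  refine sum_congr (by simp) fun i _ => ?_
  push_cast
  congr 1
  ring

theorem cos_add_two_pi_div_mul_eq_sin {μ : ℝ} (hμ : μ ≠ 0) (ψ x : ℝ) :
    cos (ψ + 2 * π / μ * x) = sin (2 * π / μ * (x - (3 / 4 - ψ / (2 * π)) * μ)) := by
  have hangle : ψ + 2 * π / μ * x = 2 * π / μ * (x - (3 / 4 - ψ / (2 * π)) * μ) - π / 2 + 2 * π := by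
    field_simp
    ring
  rw [hangle, cos_add_two_pi, cos_sub_pi_div_two]

theorem sum_range_ite_sin_pos_eq_sum_range_half {M : Type*} [AddCommMonoid M] {μ h : ℕ}
    (hμh : μ = h + h) {s : ℝ} {c : ℤ} (hsc : s < c) (hcs : c < s + 1) (f : ℝ → M) :
    ∑ i ∈ range μ, (if 0 < sin (2 * π / μ * (c + i - s)) then f (c + i) else 0)
      = ∑ i ∈ range h, f (c + i) := by
  rw [hμh, sum_range_add, ← add_zero (∑ i ∈ range h, f _)]
  congr 1
  · refine sum_congr rfl fun i hi => if_pos ?_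
    have hi : (i : ℝ) + 1 ≤ h := by exact_mod_cast mem_range.mp hi
    apply sin_two_pi_div_mul_pos <;> push_cast <;> linarith
  · refine sum_eq_zero fun i hi => if_neg (not_lt.mpr (sin_two_pi_div_mul_neg ?_ ?_).le)
    all_goals
      have hi : (i : ℝ) + 1 ≤ h := by exact_mod_cast mem_range.mp hi
      push_cast
      linarith

theorem cuma_interference_power_closed_form_general (μ W : ℕ) (hμ2 : 2 ≤ μ) (hμe : Even μ)
    (ψu : ℝ)
    (t : ℝ) (ht : t = 3 / 4 - ψu / (2 * π))
    (hni : ∀ n : ℤ, t * μ ≠ (n : ℝ))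
    (V : ℝ) (hV : V = Real.sin (π / μ) / W)
    (ψi ζi : ℝ) :
    ζi * (∑ k ∈ (Finset.Icc 2 (μ * W + 1)).filter
          (fun k => 0 < Real.cos (ψu + 2 * π / μ * ((k : ℝ) - 1))),
        Real.cos (ψi + 2 * π / μ * ((k : ℝ) - 1))) ^ 2
      = ζi / V ^ 2 * Real.sin (ψi - π / μ + 2 * π / μ * (⌈t * μ⌉ : ℝ)) ^ 2 := by
  obtain ⟨h, hμh⟩ := hμe
  have hμ : (μ : ℝ) ≠ 0 := Nat.cast_ne_zero.mpr (by omega)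
  set c := ⌈t * μ⌉
  set G : ℝ → ℝ := fun x =>
    if 0 < sin (2 * π / μ * (x - t * μ)) then cos (ψi + 2 * π / μ * x) else 0
  have hG : Function.Periodic (fun m : ℤ => G m) μ := fun m => by
    simp only [G, Int.cast_add, Int.cast_natCast, mul_add, add_sub_right_comm,
      show 2 * π / μ * μ = 2 * π by field_simp, ← add_assoc, sin_add_two_pi, cos_add_two_pi]
  have hperiod : ∑ i ∈ range (μ * W), G (1 + i) = W * ∑ i ∈ range μ, G (c + i) := by
    simpa using hG.sum_range_mul 1 c W
  -- `tμ ∉ ℤ` gives `tμ < c`, so no port sits on a zero of `sin (2π (m - tμ) / μ)`.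
  have hwindow : ∑ i ∈ range μ, G (c + i) = ∑ i ∈ range h, cos (ψi + 2 * π / μ * (c + i)) :=
    sum_range_ite_sin_pos_eq_sum_range_half hμh ((Int.le_ceil _).lt_of_ne (hni c))
      (Int.ceil_lt_add_one _) fun x => cos (ψi + 2 * π / μ * x)
  have hsum := sin_pi_div_mul_sum_range_cos hμh (by omega) ψi c
  have hsin : sin (π / μ) ≠ 0 := (sin_pi_div_pos (by exact_mod_cast hμ2)).ne'
  rw [sum_filter]
  simp only [cos_add_two_pi_div_mul_eq_sin hμ ψu, ← ht]
  rw [sum_natCast_Icc_two_sub_one G, hperiod, hwindow,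
    eq_div_of_mul_eq hsin ((mul_comm _ _).trans hsum), hV, div_pow, div_div_eq_mul_div]
  ring

/-- Theorem 3: closed form of the received CUMA in-phase interference power from an
interfering user with phase `ψ̃` and path-loss `ζ̃`. -/
theorem cuma_interference_power_closed_form (μ W : ℕ) (hμ2 : 2 ≤ μ) (hμe : Even μ)
    (hW : 1 ≤ W)
    (ψu : ℝ) (hψu0 : 0 < ψu) (hψu2 : ψu < 2 * π)
    (t : ℝ) (ht : t = 3 / 4 - ψu / (2 * π))
    (hni : ∀ n : ℤ, t * μ ≠ (n : ℝ))
    (V : ℝ) (hV : V = Real.sin (π / μ) / W)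
    (ψi ζi : ℝ) (hψi0 : 0 < ψi) (hψi2 : ψi < 2 * π) (hζi : 0 < ζi) :
    ζi * (∑ k ∈ (Finset.Icc 2 (μ * W + 1)).filter
          (fun k => 0 < Real.cos (ψu + 2 * π / μ * ((k : ℝ) - 1))),
        Real.cos (ψi + 2 * π / μ * ((k : ℝ) - 1))) ^ 2
      = ζi / V ^ 2 * Real.sin (ψi - π / μ + 2 * π / μ * (⌈t * μ⌉ : ℝ)) ^ 2 :=
  cuma_interference_power_closed_form_general μ W hμ2 hμe ψu t ht hni V hV ψi ζi
end

section
/- Let μ ≥ 2 be an even integer, ζ > 0, V > 0. Let F_Y be the CDF of the distribution with density f_Y(y) = (1/π)·√(V²/(ζy − V²y²)) on (0, ζ/V²), and let F_α be the CDF of the distribution with density f_α(α) = (μ/(2π))·√(V²/(ζα − V²α²)) on (cos²(π/μ)·ζ/V², ζ/V²). Then F_α(Y) ≤ F_Y(Y) for all Y ∈ ℝ (first-order stochastic dominance of the signal power over the per-user interference power), and if μ ≥ 4 the inequality is strict for some Y ∈ ℝ. -/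
open Real MeasureTheory

/-- Density of the per-user CUMA interference power (Corollary 1):
`(1/π)·√(V²/(ζy − V²y²))` on `(0, ζ/V²)` and `0` otherwise. -/
noncomputable def interferenceDensity (ζ V y : ℝ) : ℝ :=
  if y ∈ Set.Ioo 0 (ζ / V ^ 2)
  then 1 / π * Real.sqrt (V ^ 2 / (ζ * y - V ^ 2 * y ^ 2))
  else 0

/-- Density of the received CUMA signal power (Theorem 2):
`(μ/(2π))·√(V²/(ζα − V²α²))` on `(cos²(π/μ)ζ/V², ζ/V²)` and `0` otherwise. -/
noncomputable def signalDensity (μ : ℕ) (ζ V α : ℝ) : ℝ :=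
  if α ∈ Set.Ioo (Real.cos (π / μ) ^ 2 * ζ / V ^ 2) (ζ / V ^ 2)
  then μ / (2 * π) * Real.sqrt (V ^ 2 / (ζ * α - V ^ 2 * α ^ 2))
  else 0

/-! Both densities are multiples of the arcsine kernel `(y (b - y))^{-1/2}`, `b = ζ/V²`, whose
primitive is the angle `θ(y) = arccos (1 - 2y/b)`. The interference CDF is `θ/π`; since
`θ(cos²(π/μ) b) = π - 2π/μ`, above the lower end of its support the signal CDF is
`μ/(2π) (θ - π + 2π/μ)`, and the difference of the two is `(μ/2 - 1)(1 - θ/π) ≥ 0`. At the lower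
end of the signal support the signal CDF vanishes while `θ/π = 1 - 2/μ > 0` once `μ > 2`. -/

open Set

noncomputable def arcsineAngle (b y : ℝ) : ℝ := arccos (1 - 2 * y / b)

lemma continuous_arcsineAngle (b : ℝ) : Continuous (arcsineAngle b) :=
  continuous_arccos.comp (by fun_prop)

lemma arcsineAngle_zero (b : ℝ) : arcsineAngle b 0 = 0 := by
  simp [arcsineAngle]

lemma arcsineAngle_cos_sq_mul {b t : ℝ} (hb : b ≠ 0) (ht₀ : 0 ≤ t) (ht : t ≤ π / 2) :
    arcsineAngle b (cos t ^ 2 * b) = π - 2 * t := by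
  have h : 1 - 2 * (cos t ^ 2 * b) / b = cos (π - 2 * t) := by
    rw [cos_pi_sub, cos_two_mul]
    field_simp
    ring
  rw [arcsineAngle, h, arccos_cos (by linarith) (by linarith)]

lemma hasDerivAt_arcsineAngle {b y : ℝ} (hy : y ∈ Ioo 0 b) :
    HasDerivAt (arcsineAngle b) (√(y * (b - y)))⁻¹ y := by
  obtain ⟨hy₀, hyb⟩ := hy
  have hb : 0 < b := hy₀.trans hyb
  have hprod : 0 < y * (b - y) := mul_pos hy₀ (sub_pos.2 hyb)
  have hlt : 0 < 2 * y / b := by positivity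
  have hgt : 2 * y / b < 2 := by rw [div_lt_iff₀ hb]; linarith
  have hinner : HasDerivAt (fun x => 1 - 2 * x / b) (-(2 / b)) y := by
    simpa [div_mul_eq_mul_div] using ((hasDerivAt_id y).const_mul (2 / b)).const_sub 1
  have hsqrt : √(1 - (1 - 2 * y / b) ^ 2) = 2 / b * √(y * (b - y)) := by
    rw [show 1 - (1 - 2 * y / b) ^ 2 = (2 / b) ^ 2 * (y * (b - y)) by field_simp; ring,
      sqrt_mul (by positivity), sqrt_sq (by positivity)]
  refine ((hasDerivAt_arccos (by linarith) (by linarith)).comp y hinner).congr_deriv ?_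
  have : 0 < √(y * (b - y)) := sqrt_pos.2 hprod
  rw [hsqrt]
  field_simp

lemma integral_Ioo_inv_sqrt_mul_sub {b a₁ a₂ : ℝ} (h₀ : 0 ≤ a₁) (h₁₂ : a₁ ≤ a₂) (h₂ : a₂ ≤ b) :
    ∫ y in Ioo a₁ a₂, (√(y * (b - y)))⁻¹ = arcsineAngle b a₂ - arcsineAngle b a₁ := by
  have hderiv : ∀ y ∈ Ioo a₁ a₂, HasDerivAt (arcsineAngle b) (√(y * (b - y)))⁻¹ y :=
    fun y hy => hasDerivAt_arcsineAngle ⟨h₀.trans_lt hy.1, hy.2.trans_le h₂⟩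
  have hint : IntervalIntegrable (fun y => (√(y * (b - y)))⁻¹) volume a₁ a₂ := by
    refine intervalIntegral.intervalIntegrable_deriv_of_nonneg
      (continuous_arcsineAngle b).continuousOn ?_ fun y _ => inv_nonneg.2 (sqrt_nonneg _)
    simpa [min_eq_left h₁₂, max_eq_right h₁₂] using hderiv
  rw [← integral_Ioc_eq_integral_Ioo, ← intervalIntegral.integral_of_le h₁₂]
  exact intervalIntegral.integral_eq_sub_of_hasDerivAt_of_le h₁₂
    (continuous_arcsineAngle b).continuousOn hderiv hint

lemma setIntegral_Iic_indicator_inv_sqrt_mul_sub {b l Y : ℝ} (k : ℝ) (hl : 0 ≤ l) (hlb : l ≤ b)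
    (hY : l < Y) :
    ∫ y in Iic Y, (Ioo l b).indicator (fun y => k * (√(y * (b - y)))⁻¹) y
      = k * (arcsineAngle b (min Y b) - arcsineAngle b l) := by
  rw [setIntegral_indicator measurableSet_Ioo,
    ← setIntegral_congr_set ((Iio_ae_eq_Iic (μ := volume)).inter (ae_eq_refl (Ioo l b))),
    inter_comm, Ioo_inter_Iio, min_comm, integral_const_mul,
    integral_Ioo_inv_sqrt_mul_sub hl (le_min hY.le hlb) (min_le_right _ _)]

lemma sqrt_sq_div_eq_inv_sqrt {ζ V : ℝ} (hV : V ≠ 0) (y : ℝ) :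
    √(V ^ 2 / (ζ * y - V ^ 2 * y ^ 2)) = (√(y * (ζ / V ^ 2 - y)))⁻¹ := by
  rw [show ζ * y - V ^ 2 * y ^ 2 = V ^ 2 * (y * (ζ / V ^ 2 - y)) by field_simp,
    div_mul_cancel_left₀ (by positivity), sqrt_inv]

section Densities

variable {ζ V : ℝ}

lemma interferenceDensity_eq_indicator (hV : V ≠ 0) :
    interferenceDensity ζ V
      = (Ioo 0 (ζ / V ^ 2)).indicator fun y => 1 / π * (√(y * (ζ / V ^ 2 - y)))⁻¹ := by
  funext y
  simp only [interferenceDensity, indicator_apply, sqrt_sq_div_eq_inv_sqrt hV]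

lemma signalDensity_eq_indicator (μ : ℕ) (hV : V ≠ 0) :
    signalDensity μ ζ V = (Ioo (cos (π / μ) ^ 2 * (ζ / V ^ 2)) (ζ / V ^ 2)).indicator
      fun y => μ / (2 * π) * (√(y * (ζ / V ^ 2 - y)))⁻¹ := by
  funext y
  simp only [signalDensity, indicator_apply, sqrt_sq_div_eq_inv_sqrt hV, mul_div_assoc]

lemma interferenceDensity_nonneg (y : ℝ) : 0 ≤ interferenceDensity ζ V y := by
  unfold interferenceDensity
  split_ifs <;> positivity

lemma integral_Iic_interferenceDensity (hζ : 0 < ζ) (hV : V ≠ 0) {Y : ℝ} (hY : 0 < Y) :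
    ∫ y in Iic Y, interferenceDensity ζ V y = arcsineAngle (ζ / V ^ 2) (min Y (ζ / V ^ 2)) / π := by
  rw [interferenceDensity_eq_indicator hV,
    setIntegral_Iic_indicator_inv_sqrt_mul_sub _ le_rfl (by positivity) hY, arcsineAngle_zero]
  ring

variable {μ : ℕ}

lemma integral_Iic_signalDensity_of_le {Y : ℝ} (hY : Y ≤ cos (π / μ) ^ 2 * ζ / V ^ 2) :
    ∫ y in Iic Y, signalDensity μ ζ V y = 0 :=
  setIntegral_eq_zero_of_forall_eq_zero fun _ hy =>
    if_neg fun h => (h.1.trans_le hy).not_ge hY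

lemma integral_Iic_signalDensity (hμ : 2 ≤ μ) (hζ : 0 < ζ) (hV : V ≠ 0) {Y : ℝ}
    (hY : cos (π / μ) ^ 2 * ζ / V ^ 2 < Y) :
    ∫ y in Iic Y, signalDensity μ ζ V y
      = μ / (2 * π) * (arcsineAngle (ζ / V ^ 2) (min Y (ζ / V ^ 2)) - (π - 2 * (π / μ))) := by
  have hμ' : (2 : ℝ) ≤ μ := by exact_mod_cast hμ
  have hπμ : π / μ ≤ π / 2 := div_le_div_of_nonneg_left pi_pos.le two_pos hμ'
  rw [mul_div_assoc] at hY
  rw [signalDensity_eq_indicator μ hV,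
    setIntegral_Iic_indicator_inv_sqrt_mul_sub _ (by positivity)
      (mul_le_of_le_one_left (by positivity) (cos_sq_le_one _)) hY,
    arcsineAngle_cos_sq_mul (by positivity) (by positivity) hπμ]

end Densities

lemma mul_sub_pi_sub_le_div_pi {m θ : ℝ} (hm : 2 ≤ m) (hθ : θ ≤ π) :
    m / (2 * π) * (θ - (π - 2 * (π / m))) ≤ θ / π := by
  have key : θ / π - m / (2 * π) * (θ - (π - 2 * (π / m))) = (m / 2 - 1) * (1 - θ / π) := by
    field_simp
    ring
  have : θ / π ≤ 1 := (div_le_one pi_pos).2 hθ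
  rw [← sub_nonneg, key]
  exact mul_nonneg (by linarith) (by linarith)

theorem cuma_signal_fosd_interference_general (μ : ℕ) (hμ2 : 2 ≤ μ)
    (ζ V : ℝ) (hζ : 0 < ζ) (hV : 0 < V) :
    (∀ Y : ℝ, (∫ y in Set.Iic Y, signalDensity μ ζ V y)
        ≤ ∫ y in Set.Iic Y, interferenceDensity ζ V y) ∧
    (4 ≤ μ → ∃ Y : ℝ, (∫ y in Set.Iic Y, signalDensity μ ζ V y)
        < ∫ y in Set.Iic Y, interferenceDensity ζ V y) := by
  have hc : 0 ≤ cos (π / μ) ^ 2 * ζ / V ^ 2 := by positivity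
  refine ⟨fun Y => ?_, fun hμ4 => ⟨cos (π / μ) ^ 2 * ζ / V ^ 2, ?_⟩⟩
  · rcases le_or_gt Y (cos (π / μ) ^ 2 * ζ / V ^ 2) with hY | hY
    · rw [integral_Iic_signalDensity_of_le hY]
      exact integral_nonneg interferenceDensity_nonneg
    · rw [integral_Iic_signalDensity hμ2 hζ hV.ne' hY,
        integral_Iic_interferenceDensity hζ hV.ne' (hc.trans_lt hY)]
      exact mul_sub_pi_sub_le_div_pi (by exact_mod_cast hμ2) (arccos_le_pi _)
  · have hμ4' : (4 : ℝ) ≤ μ := by exact_mod_cast hμ4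
    have hπμ₀ : 0 < π / μ := div_pos pi_pos (by linarith)
    have hπμ : π / μ < π / 2 := div_lt_div_of_pos_left pi_pos two_pos (by linarith)
    have hcos : 0 < cos (π / μ) := cos_pos_of_mem_Ioo ⟨by linarith, hπμ⟩
    have hcb : cos (π / μ) ^ 2 * ζ / V ^ 2 ≤ ζ / V ^ 2 :=
      div_le_div_of_nonneg_right (mul_le_of_le_one_left hζ.le (cos_sq_le_one _)) (by positivity)
    rw [integral_Iic_signalDensity_of_le le_rfl,
      integral_Iic_interferenceDensity hζ hV.ne' (by positivity), min_eq_left hcb, mul_div_assoc,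
      arcsineAngle_cos_sq_mul (by positivity) hπμ₀.le hπμ.le]
    exact div_pos (by linarith) pi_pos

/-- Corollary 7: the CUMA signal power first-order stochastically dominates the
per-user interference power: its CDF is everywhere below that of the interference
power, strictly at some point when `μ ≥ 4`. -/
theorem cuma_signal_fosd_interference (μ : ℕ) (hμ2 : 2 ≤ μ) (hμe : Even μ)
    (ζ V : ℝ) (hζ : 0 < ζ) (hV : 0 < V) :
    (∀ Y : ℝ, (∫ y in Set.Iic Y, signalDensity μ ζ V y)
        ≤ ∫ y in Set.Iic Y, interferenceDensity ζ V y) ∧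
    (4 ≤ μ → ∃ Y : ℝ, (∫ y in Set.Iic Y, signalDensity μ ζ V y)
        < ∫ y in Set.Iic Y, interferenceDensity ζ V y) :=
  cuma_signal_fosd_interference_general μ hμ2 ζ V hζ hV
end
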